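/- Let G be the group of orientation-preserving diffeomorphisms of S^1 and H the subgroup fixing each of n ≥ 1 given distinct points p_0,...,p_{n-1} ∈ S^1. Then H is contractible (as a topological group with the C^∞ Whitney topology). -/

import Mathlib

open Real

/-- `h` is an orientation-preserving diffeomorphism of the circle: it lifts through
`t ↦ e^{2πit}` to a smooth strictly increasing function `f : ℝ → ℝ` with everywhere
positive derivative and `f(t+1) = f(t)+1`. -/
def IsOPDiff (h : Circle ≃ₜ Circle) : Prop :=
  ∃ f : ℝ → ℝ, ContDiff ℝ (⊤ : ℕ∞) f ∧ StrictMono f ∧ (∀ t, 0 < deriv f t) ∧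
    (∀ t, f (t + 1) = f t + 1) ∧
    ∀ t, h (Circle.exp (2 * π * t)) = Circle.exp (2 * π * f t)

/-- The group `Diff₊(S¹)` of orientation-preserving diffeomorphisms of the circle. -/
def DiffS1 : Type := {h : Circle ≃ₜ Circle // IsOPDiff h}

/-- Topology on `Diff₊(S¹)` (induced by the maps to continuous self-maps of `S¹`). -/
noncomputable instance : TopologicalSpace DiffS1 :=
  TopologicalSpace.induced
    (fun h => ((h.1 : C(Circle, Circle)), (h.1.symm : C(Circle, Circle))))
    inferInstance

open Function Set

noncomputable def ec (t : ℝ) : Circle := Circle.exp (2 * π * t)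

lemma ec_def (t : ℝ) : ec t = Circle.exp (2 * π * t) := rfl

lemma ec_eq_iff {a b : ℝ} : ec a = ec b ↔ ∃ k : ℤ, a = b + k := by
  unfold ec
  rw [Circle.exp_eq_exp]
  constructor
  · rintro ⟨m, hm⟩
    have hpi : (2:ℝ) * π ≠ 0 := by positivity
    refine ⟨m, mul_left_cancel₀ hpi ?_⟩
    rw [hm]; ring
  · rintro ⟨k, hk⟩
    exact ⟨k, by rw [hk]; ring⟩

lemma ec_surjective : Function.Surjective ec := by
  intro z
  refine ⟨Complex.arg z / (2 * π), ?_⟩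
  unfold ec
  rw [mul_div_cancel₀ _ (by positivity : (2:ℝ) * π ≠ 0)]
  exact Circle.exp_arg z

lemma continuous_ec : Continuous ec := by
  exact (map_continuous Circle.exp).comp (continuous_const.mul continuous_id)

lemma ec_add_int (t : ℝ) (k : ℤ) : ec (t + k) = ec t := ec_eq_iff.2 ⟨k, rfl⟩


noncomputable def phiF (f : ℝ → ℝ) (x : ℝ) : ℝ := 2 * π * f (x / (2 * π))

lemma f_int {f : ℝ → ℝ} (hp : ∀ t, f (t + 1) = f t + 1) (t : ℝ) (k : ℤ) :
    f (t + k) = f t + k := by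
  induction k using Int.induction_on with
  | zero => simp
  | succ n ih =>
      have h1 := hp (t + n)
      push_cast at ih ⊢
      rw [show t + ((n:ℝ) + 1) = t + n + 1 by ring, h1, ih]; ring
  | pred n ih =>
      have h1 := hp (t + (-(n:ℝ) - 1))
      push_cast at ih ⊢
      rw [show t + (-(n:ℝ) - 1) + 1 = t + -n by ring,
        show t + (-(n:ℝ) - 1) = t + -(n:ℝ) - 1 by ring] at h1
      rw [show t + (-(n:ℝ) - 1) = t + -(n:ℝ) - 1 by ring]
      linarith
lemma phiF_rel {f : ℝ → ℝ} (hp : ∀ t, f (t + 1) = f t + 1) (x y : ℝ)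
    (h : (QuotientAddGroup.leftRel (AddSubgroup.zmultiples (2 * π))) x y) :
    (QuotientAddGroup.leftRel (AddSubgroup.zmultiples (2 * π))) (phiF f x) (phiF f y) := by
  have h2π : (2:ℝ) * π ≠ 0 := by positivity
  rw [QuotientAddGroup.leftRel_apply, AddSubgroup.mem_zmultiples_iff] at h ⊢
  obtain ⟨k, hk⟩ := h
  rw [zsmul_eq_mul] at hk
  refine ⟨k, ?_⟩
  have hy : y = x + k * (2 * π) := by linarith
  have : phiF f y = phiF f x + k * (2 * π) := by
    unfold phiF
    rw [hy, show (x + k * (2*π)) / (2*π) = x / (2*π) + k by field_simp,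
      f_int hp]
    ring
  rw [zsmul_eq_mul, this]; ring

noncomputable def barF (f : ℝ → ℝ) (hp : ∀ t, f (t + 1) = f t + 1) :
    AddCircle (2 * π) → AddCircle (2 * π) :=
  Quotient.map' (phiF f) (phiF_rel hp)

lemma barF_coe (f : ℝ → ℝ) (hp : ∀ t, f (t + 1) = f t + 1) (x : ℝ) :
    barF f hp (x : AddCircle (2 * π)) = (phiF f x : AddCircle (2 * π)) := rfl

noncomputable def cm (f : ℝ → ℝ) (hp : ∀ t, f (t + 1) = f t + 1) : Circle → Circle :=
  fun z => AddCircle.homeomorphCircle' (barF f hp (AddCircle.homeomorphCircle'.symm z))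

lemma cm_ec (f : ℝ → ℝ) (hp : ∀ t, f (t + 1) = f t + 1) (t : ℝ) :
    cm f hp (ec t) = ec (f t) := by
  have h2π : (2:ℝ) * π ≠ 0 := by positivity
  have h1 : ec t = AddCircle.homeomorphCircle' ((2 * π * t : ℝ) : AddCircle (2*π)) := by
    rw [AddCircle.homeomorphCircle'_apply_mk, ec_def]
  unfold cm
  rw [h1, Homeomorph.symm_apply_apply, barF_coe]
  have h2 : phiF f (2 * π * t) = 2 * π * f t := by
    unfold phiF; rw [mul_div_cancel_left₀ _ h2π]
  rw [h2, AddCircle.homeomorphCircle'_apply_mk, ec_def]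

lemma cm_cont {Y : Type*} [TopologicalSpace Y] (F : Y → ℝ → ℝ)
    (hp : ∀ y t, F y (t + 1) = F y t + 1)
    (hF : Continuous fun p : Y × ℝ => F p.1 p.2) :
    Continuous fun p : Y × Circle => cm (F p.1) (hp p.1) p.2 := by
  have key : Continuous fun p : Y × AddCircle (2 * π) => barF (F p.1) (hp p.1) p.2 := by
    rw [← (IsOpenQuotientMap.id.prodMap (QuotientAddGroup.isOpenQuotientMap_mk
      (N := AddSubgroup.zmultiples (2 * π)))).continuous_comp_iff]
    have : (fun p : Y × AddCircle (2*π) => barF (F p.1) (hp p.1) p.2) ∘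
        (Prod.map id (QuotientAddGroup.mk)) =
        fun p : Y × ℝ => ((phiF (F p.1) p.2 : ℝ) : AddCircle (2 * π)) := by
      funext p; exact barF_coe (F p.1) (hp p.1) p.2
    rw [this]
    exact continuous_quotient_mk'.comp
      (by unfold phiF;
          exact continuous_const.mul (hF.comp (continuous_fst.prodMk
            (continuous_snd.div_const _))))
  unfold cm
  exact AddCircle.homeomorphCircle'.continuous.comp
    (key.comp (continuous_fst.prodMk
      (AddCircle.homeomorphCircle'.symm.continuous.comp continuous_snd)))


attribute [irreducible] cm barF

lemma dist_ec (a b : ℝ) : dist (ec a) (ec b) = dist (ec (a - b)) 1 := by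
  have h1 : ec a = ec (a - b) * ec b := by
    simp only [ec_def]
    rw [← Circle.exp_add]; ring_nf
  rw [h1]
  have : ∀ z w : Circle, dist z w = ‖(z:ℂ) - (w:ℂ)‖ := by
    intro z w; rw [← dist_eq_norm]; rfl
  rw [this, this]
  have hb : ‖(ec b : ℂ)‖ = 1 := Circle.norm_coe _
  calc ‖(↑(ec (a-b) * ec b) : ℂ) - ↑(ec b)‖
      = ‖((ec (a-b) : ℂ) - 1) * (ec b : ℂ)‖ := by
        rw [Circle.coe_mul]; ring_nf
    _ = ‖(ec (a-b) : ℂ) - 1‖ := by rw [norm_mul, hb, mul_one]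
    _ = ‖(ec (a-b) : ℂ) - ((1 : Circle) : ℂ)‖ := by norm_num


lemma ec_one : ec 0 = 1 := by rw [ec_def]; norm_num

lemma exists_sep (ε : ℝ) (h0 : 0 < ε) (h2 : ε < 1/2) :
    ∃ δ > 0, ∀ x : ℝ, Int.fract x ∈ Icc ε (1 - ε) → δ ≤ dist (ec x) 1 := by
  have hne : (Icc ε (1 - ε)).Nonempty := ⟨ε, le_refl _, by linarith⟩
  obtain ⟨x₀, hx₀, hmin⟩ := isCompact_Icc.exists_isMinOn hne
    ((continuous_ec.dist continuous_const).continuousOn)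
  refine ⟨dist (ec x₀) 1, ?_, ?_⟩
  · rcases (dist_nonneg (x := ec x₀) (y := 1)).lt_or_eq with h | h
    · exact h
    · exfalso
      have : ec x₀ = 1 := dist_eq_zero.1 h.symm
      rw [← ec_one, ec_eq_iff] at this
      obtain ⟨k, hk⟩ := this
      simp only [zero_add] at hk
      rcases le_or_gt k 0 with hk0 | hk0
      · have : (k:ℝ) ≤ 0 := by exact_mod_cast hk0
        have := hx₀.1; linarith [hk ▸ this]
      · have hk1 : (1:ℤ) ≤ k := hk0
        have : (1:ℝ) ≤ (k:ℝ) := by exact_mod_cast hk1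
        have := hx₀.2; rw [hk] at this; linarith
  · intro x hx
    have : ec x = ec (Int.fract x) := by
      rw [ec_eq_iff]
      exact ⟨⌊x⌋, by rw [Int.fract]; ring⟩
    rw [this]
    exact hmin hx

lemma lift_close (ε : ℝ) (h0 : 0 < ε) (h2 : ε < 1/2) :
    ∃ δ > 0, ∀ (t₀ : ℝ) (g g₀ : ℝ → ℝ), Continuous g → Continuous g₀ →
      g t₀ = g₀ t₀ → (∀ u, dist (ec (g u)) (ec (g₀ u)) < δ) →
      ∀ u, |g u - g₀ u| < ε := by
  obtain ⟨δ, hδ, hsep⟩ := exists_sep ε h0 h2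
  refine ⟨δ, hδ, fun t₀ g g₀ hg hg₀ heq hclose u => ?_⟩
  set φ : ℝ → ℝ := fun u => g u - g₀ u with hφdef
  have hφc : Continuous φ := hg.sub hg₀
  have hφ0 : φ t₀ = 0 := by simp [hφdef, heq]
  have hfr : ∀ v, Int.fract (φ v) ∉ Icc ε (1 - ε) := by
    intro v hv
    have h1 := hsep (φ v) hv
    rw [← dist_ec] at h1
    exact absurd (hclose v) (not_lt.2 h1)
  by_contra hcon
  push_neg at hcon
  rcases le_abs.1 hcon with h | h
  · have hmem : ε ∈ uIcc (φ t₀) (φ u) := by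
      rw [hφ0]; exact mem_uIcc.2 (Or.inl ⟨h0.le, h⟩)
    obtain ⟨c, -, hc⟩ := intermediate_value_uIcc hφc.continuousOn hmem
    refine hfr c ?_
    rw [hc, Int.fract_eq_self.2 ⟨h0.le, by linarith⟩]
    exact ⟨le_refl _, by linarith⟩
  · have h' : φ u ≤ -ε := by simp only [hφdef]; linarith
    have hmem : -ε ∈ uIcc (φ t₀) (φ u) := by
      rw [hφ0]; exact mem_uIcc.2 (Or.inr ⟨h', by linarith⟩)
    obtain ⟨c, -, hc⟩ := intermediate_value_uIcc hφc.continuousOn hmem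
    have hfl : ⌊(-ε : ℝ)⌋ = -1 := by
      rw [Int.floor_eq_iff] <;> push_cast <;> constructor <;> linarith
    have hf2 : Int.fract (-ε : ℝ) = 1 - ε := by
      rw [Int.fract, hfl]; push_cast; ring
    refine hfr c ?_
    rw [hc, hf2]
    exact ⟨by linarith, le_refl _⟩


lemma inv_family_continuous {Y : Type*} [TopologicalSpace Y] (F : Y → ℝ → ℝ)
    (hF : Continuous fun p : Y × ℝ => F p.1 p.2)
    (hm : ∀ y, StrictMono (F y)) (hs : ∀ y, Function.Surjective (F y)) :
    Continuous fun p : Y × ℝ => Function.invFun (F p.1) p.2 := by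
  rw [continuous_iff_continuousAt]
  rintro ⟨y₀, t₀⟩
  rw [ContinuousAt, Metric.tendsto_nhds]
  intro ε hε
  set u₀ := Function.invFun (F y₀) t₀ with hu₀
  have hFu₀ : F y₀ u₀ = t₀ := Function.invFun_eq (hs y₀ t₀)
  set ε' := min ε 1 with hε'
  have hε'0 : 0 < ε' := lt_min hε one_pos
  have hlt : F y₀ (u₀ - ε') < t₀ := by
    rw [← hFu₀]; exact (hm y₀) (by linarith)
  have hgt : t₀ < F y₀ (u₀ + ε') := by
    rw [← hFu₀]; exact (hm y₀) (by linarith)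
  have hU : IsOpen {p : Y × ℝ | F p.1 (u₀ - ε') < p.2 ∧ p.2 < F p.1 (u₀ + ε')} := by
    apply IsOpen.inter
    · exact isOpen_lt (hF.comp (continuous_fst.prodMk continuous_const)) continuous_snd
    · exact isOpen_lt continuous_snd (hF.comp (continuous_fst.prodMk continuous_const))
  have hmem : (y₀, t₀) ∈ {p : Y × ℝ | F p.1 (u₀ - ε') < p.2 ∧ p.2 < F p.1 (u₀ + ε')} :=
    ⟨hlt, hgt⟩
  filter_upwards [hU.mem_nhds hmem] with p hp
  obtain ⟨hp1, hp2⟩ := hp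
  have hFu : F p.1 (Function.invFun (F p.1) p.2) = p.2 := Function.invFun_eq (hs p.1 p.2)
  have h1 : u₀ - ε' < Function.invFun (F p.1) p.2 := by
    have := (hm p.1).lt_iff_lt.1 (hFu ▸ hp1); exact this
  have h2 : Function.invFun (F p.1) p.2 < u₀ + ε' := by
    have := (hm p.1).lt_iff_lt.1 (hFu ▸ hp2); exact this
  rw [Real.dist_eq, abs_lt]
  have hmin : ε' ≤ ε := min_le_left ε 1
  constructor
  · linarith
  · linarith


lemma surj_of_period {f : ℝ → ℝ} (hc : Continuous f) (hp : ∀ t, f (t + 1) = f t + 1) :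
    Function.Surjective f := by
  intro y
  obtain ⟨m, hm⟩ := exists_nat_ge (f 0 - y)
  obtain ⟨k, hk⟩ := exists_nat_ge (y - f 0)
  have h1 : f (-(m:ℝ)) = f 0 - m := by
    have := f_int hp 0 (-(m:ℤ)); push_cast at this; rw [zero_add] at this; linarith
  have h2 : f ((k:ℝ)) = f 0 + k := by
    have := f_int hp 0 (k:ℤ); push_cast at this; rw [zero_add] at this; linarith
  have hle : -(m:ℝ) ≤ (k:ℝ) := by
    have h3 : (0:ℝ) ≤ m := Nat.cast_nonneg m
    have h4 : (0:ℝ) ≤ k := Nat.cast_nonneg k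
    linarith
  have hy : y ∈ Icc (f (-(m:ℝ))) (f (k:ℝ)) := by
    rw [h1, h2]; exact ⟨by linarith, by linarith⟩
  obtain ⟨x, -, hx⟩ := intermediate_value_Icc hle hc.continuousOn hy
  exact ⟨x, hx⟩


section MK
variable (f : ℝ → ℝ) (hc : Continuous f) (hm : StrictMono f)
  (hp : ∀ t, f (t + 1) = f t + 1)
include hc hm hp

omit hm in
lemma invFun_eq_self (t : ℝ) : f (Function.invFun f t) = t :=
  Function.invFun_eq (surj_of_period hc hp t)

omit hc hp in
lemma invFun_left (t : ℝ) : Function.invFun f (f t) = t :=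
  Function.leftInverse_invFun hm.injective t

lemma invFun_period (t : ℝ) : Function.invFun f (t + 1) = Function.invFun f t + 1 := by
  apply hm.injective
  rw [invFun_eq_self f hc hp, hp, invFun_eq_self f hc hp]

lemma invFun_mono : StrictMono (Function.invFun f) := by
  intro a b hab
  refine hm.lt_iff_lt.1 ?_
  rw [invFun_eq_self f hc hp, invFun_eq_self f hc hp]
  exact hab

lemma invFun_cont : Continuous (Function.invFun f) := by
  have := inv_family_continuous (Y := Unit) (fun _ => f)
    (hc.comp continuous_snd) (fun _ => hm) (fun _ => surj_of_period hc hp)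
  have h2 : Continuous fun z : ℝ => (((), z) : Unit × ℝ) := by continuity
  exact this.comp h2

noncomputable def mkCH : Circle ≃ₜ Circle where
  toFun := cm f hp
  invFun := cm (Function.invFun f) (invFun_period f hc hm hp)
  left_inv := by
    intro z
    obtain ⟨t, rfl⟩ := ec_surjective z
    rw [cm_ec, cm_ec, invFun_left f hm]
  right_inv := by
    intro z
    obtain ⟨t, rfl⟩ := ec_surjective z
    rw [cm_ec, cm_ec, invFun_eq_self f hc hp]
  continuous_toFun := by
    have := cm_cont (Y := Unit) (fun _ => f) (fun _ => hp) (hc.comp continuous_snd)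
    have h2 : Continuous fun z : Circle => (((), z) : Unit × Circle) := by continuity
    exact this.comp h2
  continuous_invFun := by
    have := cm_cont (Y := Unit) (fun _ => Function.invFun f)
      (fun _ => invFun_period f hc hm hp)
      ((invFun_cont f hc hm hp).comp continuous_snd)
    have h2 : Continuous fun z : Circle => (((), z) : Unit × Circle) := by continuity
    exact this.comp h2
end MK



lemma exists_good_lift (h : Circle ≃ₜ Circle) (hop : IsOPDiff h) (t₀ : ℝ)
    (hfix : h (ec t₀) = ec t₀) :
    ∃ g : ℝ → ℝ, ContDiff ℝ (⊤ : ℕ∞) g ∧ StrictMono g ∧ (∀ t, 0 < deriv g t) ∧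
      (∀ t, g (t + 1) = g t + 1) ∧ (∀ t, h (ec t) = ec (g t)) ∧ g t₀ = t₀ := by
  obtain ⟨f, hcd, hsm, hdp, hper, hform⟩ := hop
  have hform' : ∀ t, h (ec t) = ec (f t) := by
    intro t; rw [ec_def, ec_def]; exact hform t
  have hee : ec (f t₀) = ec t₀ := by rw [← hform', hfix]
  obtain ⟨m, hm⟩ := ec_eq_iff.1 hee
  refine ⟨fun t => f t - m, hcd.sub contDiff_const, ?_, ?_, ?_, ?_, by simp only []; linarith⟩
  · intro a b hab; simpa using hsm hab
  · intro t
    rw [deriv_sub_const]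
    exact hdp t
  · intro t; simp only []; rw [hper]; ring
  · intro t
    rw [hform']
    exact ec_eq_iff.2 ⟨m, by ring⟩

lemma G_continuous {X : Type*} [TopologicalSpace X] (P : X → C(Circle, Circle))
    (hP : Continuous P) (G : X → ℝ → ℝ) (t₀ : ℝ)
    (hGc : ∀ h, Continuous (G h)) (hanchor : ∀ h, G h t₀ = t₀)
    (hlift : ∀ h t, P h (ec t) = ec (G h t)) :
    Continuous fun q : X × ℝ => G q.1 q.2 := by
  rw [continuous_iff_continuousAt]; rintro ⟨h₀, u₀⟩
  rw [ContinuousAt, Metric.tendsto_nhds]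
  intro ε hε
  set ε₁ := min (ε/2) (1/3) with hε₁
  have hε₁0 : 0 < ε₁ := lt_min (by linarith) (by norm_num)
  have hε₁2 : ε₁ < 1/2 := lt_of_le_of_lt (min_le_right _ _) (by norm_num)
  obtain ⟨δ, hδ0, hcl⟩ := lift_close ε₁ hε₁0 hε₁2
  obtain ⟨η, hη0, hball⟩ := Metric.continuous_iff.1 (hGc h₀) u₀ (ε/2) (by linarith)
  have hUopen : IsOpen {q : X × ℝ | dist (P q.1) (P h₀) < δ ∧ dist q.2 u₀ < η} := by
    apply IsOpen.inter
    · exact isOpen_lt ((hP.comp continuous_fst).dist continuous_const) continuous_const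
    · exact isOpen_lt (continuous_snd.dist continuous_const) continuous_const
  have hmem : (h₀, u₀) ∈ {q : X × ℝ | dist (P q.1) (P h₀) < δ ∧ dist q.2 u₀ < η} := by
    constructor <;> simp [hδ0, hη0]
  filter_upwards [hUopen.mem_nhds hmem] with q hq
  obtain ⟨hq1, hq2⟩ := hq
  have hstep1 : |G q.1 q.2 - G h₀ q.2| < ε₁ := by
    refine hcl t₀ (G q.1) (G h₀) (hGc _) (hGc _) (by rw [hanchor, hanchor]) ?_ q.2
    intro u
    calc dist (ec (G q.1 u)) (ec (G h₀ u)) = dist (P q.1 (ec u)) (P h₀ (ec u)) := by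
          rw [hlift, hlift]
      _ ≤ dist (P q.1) (P h₀) := ContinuousMap.dist_apply_le_dist _
      _ < δ := hq1
  have hstep2 : dist (G h₀ q.2) (G h₀ u₀) < ε/2 := hball q.2 hq2
  have h3 : ε₁ ≤ ε/2 := min_le_left _ _
  calc dist (G q.1 q.2) (G h₀ u₀)
      ≤ dist (G q.1 q.2) (G h₀ q.2) + dist (G h₀ q.2) (G h₀ u₀) := dist_triangle _ _ _
    _ < ε₁ + ε/2 := by
        rw [Real.dist_eq]
        exact add_lt_add hstep1 hstep2
    _ ≤ ε := by linarith
/-- The subgroup of `Diff₊(S¹)` fixing each of `n ≥ 1` given distinct points of the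
circle is contractible. -/
theorem fixing_subgroup_of_diffS1_contractible (n : ℕ) (hn : 1 ≤ n)
    (p : Fin n → Circle) (hp : Function.Injective p) :
    ContractibleSpace {h : DiffS1 // ∀ k, (h.1 : Circle ≃ₜ Circle) (p k) = p k} := by
  classical
  set X := {h : DiffS1 // ∀ k, (h.1 : Circle ≃ₜ Circle) (p k) = p k} with hX
  obtain ⟨t₀, ht₀⟩ := ec_surjective (p ⟨0, hn⟩)
  choose τ hτ using fun k => ec_surjective (p k)
  set tk : Fin n → ℝ := fun k => t₀ + Int.fract (τ k - t₀) with htk_def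
  have htk : ∀ k, ec (tk k) = p k := by
    intro k
    rw [← hτ k]
    apply ec_eq_iff.2
    refine ⟨-⌊τ k - t₀⌋, ?_⟩
    rw [htk_def]
    simp only [Int.fract]
    push_cast
    ring
  have htk0 : ∀ k, t₀ ≤ tk k := fun k => le_add_of_nonneg_right (Int.fract_nonneg _)
  have htk1 : ∀ k, tk k < t₀ + 1 := fun k => by
    have := Int.fract_lt_one (τ k - t₀); rw [htk_def]; simp only []; linarith
  -- normalized lifts
  have hfix0 : ∀ h : X, (h.1.1 : Circle ≃ₜ Circle) (ec t₀) = ec t₀ := by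
    intro h; rw [ht₀]; exact h.2 ⟨0, hn⟩
  choose G hG1 hG2 hG3 hG4 hG5 hG6 using
    fun h : X => exists_good_lift h.1.1 h.1.2 t₀ (hfix0 h)
  have hGfix : ∀ (h : X) (k : Fin n), G h (tk k) = tk k := by
    intro h k
    have he : ec (G h (tk k)) = ec (tk k) := by
      rw [← hG5 h (tk k), htk k]; exact h.2 k
    obtain ⟨m, hm⟩ := ec_eq_iff.1 he
    have hb1 : G h t₀ = t₀ := hG6 h
    have hb2 : G h (t₀ + 1) = t₀ + 1 := by rw [hG4 h, hb1]
    have hlow : t₀ ≤ G h (tk k) := by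
      rw [← hb1]; exact (hG2 h).monotone (htk0 k)
    have hhigh : G h (tk k) < t₀ + 1 := by
      rw [← hb2]; exact (hG2 h) (htk1 k)
    have hm1 : (m : ℝ) < 1 := by
      have := htk0 k; linarith [hm ▸ hhigh]
    have hm2 : (-1 : ℝ) < m := by
      have := htk1 k; linarith [hm ▸ hlow]
    have : m = 0 := by
      have h1 : m < 1 := by exact_mod_cast hm1
      have h2 : -1 < m := by exact_mod_cast hm2
      omega
    rw [hm, this]; push_cast; ring
  -- continuity of the normalized lift
  set P : X → C(Circle, Circle) := fun h => ((h.1.1 : Circle ≃ₜ Circle) : C(Circle, Circle))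
    with hPdef
  have hP : Continuous P := by
    have c1 : Continuous (fun d : DiffS1 =>
        ((d.1 : C(Circle, Circle)), (d.1.symm : C(Circle, Circle)))) := continuous_induced_dom
    exact (continuous_fst.comp (c1.comp continuous_subtype_val))
  have hGcont : Continuous fun q : X × ℝ => G q.1 q.2 :=
    G_continuous P hP G t₀ (fun h => (hG1 h).continuous) hG6
      (fun h t => hG5 h t)
  -- the homotopy family
  set F : (unitInterval × X) → ℝ → ℝ :=
    fun y t => (1 - (y.1 : ℝ)) * G y.2 t + (y.1 : ℝ) * t with hFdef
  have hFper : ∀ y t, F y (t + 1) = F y t + 1 := by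
    intro y t; simp only [hFdef]; rw [hG4]; ring
  have hFcd : ∀ y, ContDiff ℝ (⊤ : ℕ∞) (F y) := by
    intro y
    exact (contDiff_const.mul (hG1 y.2)).add (contDiff_const.mul contDiff_id)
  have hFpos : ∀ y t, 0 < deriv (F y) t := by
    intro y t
    have hd : HasDerivAt (F y) ((1 - (y.1 : ℝ)) * deriv (G y.2) t + (y.1 : ℝ) * 1) t := by
      have h1 : HasDerivAt (G y.2) (deriv (G y.2) t) t :=
        (((hG1 y.2).differentiable (by simp)) t).hasDerivAt
      exact (h1.const_mul _).add ((hasDerivAt_id t).const_mul _)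
    rw [hd.deriv]
    have hs0 : (0:ℝ) ≤ (y.1 : ℝ) := y.1.2.1
    have hs1 : (y.1 : ℝ) ≤ 1 := y.1.2.2
    have hg := hG3 y.2 t
    rcases eq_or_lt_of_le hs0 with h | h
    · rw [← h]; simpa using hg
    · have : 0 ≤ (1 - (y.1 : ℝ)) * deriv (G y.2) t :=
        mul_nonneg (by linarith) hg.le
      nlinarith
  have hFmono : ∀ y, StrictMono (F y) := fun y => strictMono_of_deriv_pos (hFpos y)
  have hFcont : ∀ y, Continuous (F y) := fun y => (hFcd y).continuous
  have hFsurj : ∀ y, Function.Surjective (F y) :=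
    fun y => surj_of_period (hFcont y) (hFper y)
  have hFuncont : Continuous fun q : (unitInterval × X) × ℝ => F q.1 q.2 := by
    simp only [hFdef]
    have hcoe : Continuous fun q : (unitInterval × X) × ℝ => (q.1.1 : ℝ) :=
      continuous_subtype_val.comp (continuous_fst.comp continuous_fst)
    have hg : Continuous fun q : (unitInterval × X) × ℝ => G q.1.2 q.2 :=
      hGcont.comp ((continuous_snd.comp continuous_fst).prodMk continuous_snd)
    exact ((continuous_const.sub hcoe).mul hg).add (hcoe.mul continuous_snd)
  -- the homotopy map into X
  have hXi_mem : ∀ y : unitInterval × X,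
      IsOPDiff (mkCH (F y) (hFcont y) (hFmono y) (hFper y)) := by
    intro y
    refine ⟨F y, hFcd y, hFmono y, hFpos y, hFper y, fun t => ?_⟩
    rw [← ec_def, ← ec_def]
    exact cm_ec (F y) (hFper y) t
  have hXi_fix : ∀ (y : unitInterval × X) (k : Fin n),
      mkCH (F y) (hFcont y) (hFmono y) (hFper y) (p k) = p k := by
    intro y k
    rw [← htk k]
    show cm (F y) (hFper y) (ec (tk k)) = ec (tk k)
    rw [cm_ec]
    congr 1
    simp only [hFdef]
    rw [hGfix y.2 k]; ring
  set Xi : unitInterval × X → X :=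
    fun y => ⟨⟨mkCH (F y) (hFcont y) (hFmono y) (hFper y), hXi_mem y⟩, hXi_fix y⟩ with hXidef
  -- base point : the identity
  have hid_op : IsOPDiff (Homeomorph.refl Circle) := by
    refine ⟨fun t => t, contDiff_id, strictMono_id, ?_, fun t => rfl, fun t => rfl⟩
    intro t
    simp [deriv_id']
  set x₀ : X := ⟨⟨Homeomorph.refl Circle, hid_op⟩, fun k => rfl⟩ with hx₀
  -- continuity of the homotopy
  have hXicont : Continuous Xi := by
    apply Continuous.subtype_mk
    refine continuous_induced_rng.2 ?_
    refine Continuous.prodMk ?_ ?_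
    · -- forward maps
      apply ContinuousMap.continuous_of_continuous_uncurry
      exact cm_cont F hFper hFuncont
    · -- inverse maps
      apply ContinuousMap.continuous_of_continuous_uncurry
      have hinv : Continuous fun q : (unitInterval × X) × ℝ =>
          Function.invFun (F q.1) q.2 :=
        inv_family_continuous F hFuncont hFmono hFsurj
      exact cm_cont (fun y => Function.invFun (F y))
        (fun y => invFun_period (F y) (hFcont y) (hFmono y) (hFper y)) hinv
  -- assemble the homotopy
  rw [contractible_iff_id_nullhomotopic]
  refine ⟨x₀, ?_⟩
  refine ⟨?_⟩
  refine ⟨⟨fun q => Xi q, hXicont⟩, ?_, ?_⟩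
  · -- at time 0 : identity
    intro x
    apply Subtype.ext
    apply Subtype.ext
    apply Homeomorph.ext
    intro z
    obtain ⟨t, rfl⟩ := ec_surjective z
    show cm (F (0, x)) (hFper (0, x)) (ec t) = _
    rw [cm_ec]
    have h0 : ((0 : unitInterval) : ℝ) = 0 := rfl
    have : F (0, x) t = G x t := by simp only [hFdef, h0]; ring
    rw [this, ← hG5]
    rfl
  · -- at time 1 : constant x₀
    intro x
    apply Subtype.ext
    apply Subtype.ext
    apply Homeomorph.ext
    intro z
    obtain ⟨t, rfl⟩ := ec_surjective z
    show cm (F (1, x)) (hFper (1, x)) (ec t) = _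
    rw [cm_ec]
    have h1 : ((1 : unitInterval) : ℝ) = 1 := rfl
    have : F (1, x) t = t := by simp only [hFdef, h1]; ring
    rw [this]
    rfl
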